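/- arXiv:2104.08743 — 2 statements merged into one kernel-verified Lean document; each statement's English description precedes it below -/
import Mathlib

section
/- Let G be a finite simple graph with vertex set V whose automorphism group has exactly n orbits on V, and let A_1, A_2 ⊆ V be attribute subsets each of which has nonempty intersection with at most n−2 orbits. Then γ_{A_1}(G) = γ_{A_2}(G) (i.e., ≡_{A_1} and ≡_{A_2} coincide) if and only if O(A_1) = O(A_2). -/
/-- The orbit of a vertex `x` under the automorphism group of the graph `G`:
`O(x) = {φ(x) : φ an automorphism of G}`. -/
def orb {V : Type*} (G : SimpleGraph V) (x : V) : Set V :=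
  {y | ∃ φ : G ≃g G, φ x = y}

/-- The indiscernibility relation `x ≡_A y` iff `O(x) ∩ A = O(y) ∩ A`. -/
def Indis {V : Type*} (G : SimpleGraph V) (A : Set V) (x y : V) : Prop :=
  orb G x ∩ A = orb G y ∩ A

/-- The `≡_A`-equivalence class `O_A(x)` of a vertex `x`. -/
def eqCls {V : Type*} (G : SimpleGraph V) (A : Set V) (x : V) : Set V :=
  {y | Indis G A x y}

/-- `O(A) = ⋃_{a ∈ A} O(a)`. -/
def orbSet {V : Type*} (G : SimpleGraph V) (A : Set V) : Set V :=
  ⋃ a ∈ A, orb G a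

/-- Lower approximation `L_A(Q) = {x | O_A(x) ⊆ Q}`. -/
def lowerApprox {V : Type*} (G : SimpleGraph V) (A Q : Set V) : Set V :=
  {x | eqCls G A x ⊆ Q}

/-- Upper approximation `U_A(Q) = {x | O_A(x) ∩ Q ≠ ∅}`. -/
def upperApprox {V : Type*} (G : SimpleGraph V) (A Q : Set V) : Set V :=
  {x | (eqCls G A x ∩ Q).Nonempty}

/-- The set of orbits of the automorphism group of `G` on the vertex set. -/
def orbitsOf {V : Type*} (G : SimpleGraph V) : Set (Set V) :=
  {s | ∃ x : V, s = orb G x}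

lemma mem_orb_self {V : Type*} (G : SimpleGraph V) (x : V) : x ∈ orb G x :=
  ⟨RelIso.refl _, rfl⟩

lemma orb_eq_of_mem {V : Type*} {G : SimpleGraph V} {x y : V} (h : y ∈ orb G x) :
    orb G y = orb G x := by
  obtain ⟨φ, hφ⟩ := h
  ext z
  constructor
  · rintro ⟨ψ, hψ⟩; exact ⟨(RelIso.trans φ ψ), by simp [hφ, hψ]⟩
  · rintro ⟨ψ, hψ⟩; exact ⟨RelIso.trans φ.symm ψ, by simp [← hφ, hψ]⟩

lemma mem_orbSet_iff {V : Type*} {G : SimpleGraph V} {A : Set V} {x : V} :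
    x ∈ orbSet G A ↔ (orb G x ∩ A).Nonempty := by
  constructor
  · rintro h
    simp only [orbSet, Set.mem_iUnion] at h
    obtain ⟨a, ha, hx⟩ := h
    exact ⟨a, by rw [orb_eq_of_mem hx]; exact mem_orb_self G a, ha⟩
  · rintro ⟨a, hax, haA⟩
    simp only [orbSet, Set.mem_iUnion]
    exact ⟨a, haA, by rw [orb_eq_of_mem hax]; exact mem_orb_self G x⟩

lemma ncard_split {V : Type*} [Fintype V] (G : SimpleGraph V) (A : Set V) :
    {s ∈ orbitsOf G | (s ∩ A).Nonempty}.ncard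
      + {s ∈ orbitsOf G | ¬ (s ∩ A).Nonempty}.ncard = (orbitsOf G).ncard := by
  rw [← Set.ncard_union_eq]
  · congr 1
    ext s
    by_cases h : (s ∩ A).Nonempty <;> simp [h]
  · rw [Set.disjoint_left]; rintro s ⟨_, h⟩ ⟨_, h'⟩; exact h' h

lemma key {V : Type*} [Fintype V] (G : SimpleGraph V) (n : ℕ)
    (hn : (orbitsOf G).ncard = n) (A₁ A₂ : Set V)
    (h1 : {s ∈ orbitsOf G | (s ∩ A₁).Nonempty}.ncard ≤ n - 2)
    (h2 : {s ∈ orbitsOf G | (s ∩ A₂).Nonempty}.ncard ≤ n - 2)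
    (h : ∀ x y : V, Indis G A₁ x y ↔ Indis G A₂ x y) :
    orbSet G A₁ ⊆ orbSet G A₂ := by
  intro x hx
  by_contra hx2
  rw [mem_orbSet_iff] at hx hx2
  -- n ≥ 3
  have hn3 : 3 ≤ n := by
    have hne : {s ∈ orbitsOf G | (s ∩ A₁).Nonempty}.Nonempty := ⟨orb G x, ⟨x, rfl⟩, hx⟩
    have := Set.ncard_pos (Set.toFinite _) |>.2 hne
    omega
  have hsplit := ncard_split G A₂
  rw [hn] at hsplit
  have hbig : 1 < {s ∈ orbitsOf G | ¬ (s ∩ A₂).Nonempty}.ncard := by omega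
  obtain ⟨s, hs, hne⟩ := Set.exists_ne_of_one_lt_ncard hbig (orb G x)
  obtain ⟨⟨y, rfl⟩, hsA₂⟩ := hs
  have hI2 : Indis G A₂ x y := by
    unfold Indis
    rw [Set.not_nonempty_iff_eq_empty] at hx2 hsA₂
    rw [hx2, hsA₂]
  have hI1 : Indis G A₁ x y := (h x y).2 hI2
  obtain ⟨a, hax, haA⟩ := hx
  have hay : a ∈ orb G y ∩ A₁ := by rw [← hI1]; exact ⟨hax, haA⟩
  exact hne (by rw [← orb_eq_of_mem hay.1, orb_eq_of_mem hax])

/-- if `G` has exactly `n` orbits and each of `A₁`, `A₂` has nonempty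
intersection with at most `n - 2` of the orbits, then `γ_{A₁}(G) = γ_{A₂}(G)` iff
`O(A₁) = O(A₂)`. -/
theorem stmt_4 {V : Type*} [Fintype V] (G : SimpleGraph V) (n : ℕ)
    (hn : (orbitsOf G).ncard = n) (A₁ A₂ : Set V)
    (h1 : {s ∈ orbitsOf G | (s ∩ A₁).Nonempty}.ncard ≤ n - 2)
    (h2 : {s ∈ orbitsOf G | (s ∩ A₂).Nonempty}.ncard ≤ n - 2) :
    (∀ x y : V, Indis G A₁ x y ↔ Indis G A₂ x y) ↔ orbSet G A₁ = orbSet G A₂ := by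
  constructor
  · intro h
    apply Set.Subset.antisymm
    · exact key G n hn A₁ A₂ h1 h2 h
    · exact key G n hn A₂ A₁ h2 h1 (fun x y => (h x y).symm)
  · intro hO x y
    have hchar : ∀ (A : Set V),
        Indis G A x y ↔ (orb G x = orb G y ∨ (x ∉ orbSet G A ∧ y ∉ orbSet G A)) := by
      intro A
      simp only [mem_orbSet_iff, Set.not_nonempty_iff_eq_empty]
      constructor
      · intro hI
        rcases Set.eq_empty_or_nonempty (orb G x ∩ A) with he | ⟨a, hax, haA⟩
        · exact Or.inr ⟨he, by rw [← hI]; exact he⟩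
        · have hay : a ∈ orb G y ∩ A := by rw [← hI]; exact ⟨hax, haA⟩
          exact Or.inl (by rw [← orb_eq_of_mem hax, orb_eq_of_mem hay.1])
      · rintro (heq | ⟨he1, he2⟩)
        · unfold Indis; rw [heq]
        · unfold Indis; rw [he1, he2]
    rw [hchar A₁, hchar A₂, hO]
end

section
/- Let G = K_{m,n} be the complete bipartite graph with parts V₁ and V₂ of sizes m and n, where m ≠ n, and let V = V₁ ∪ V₂. Let A ⊆ V be a nonempty attribute subset and Q ⊆ V a nonempty subset with Q ≠ V. Then Q is A-exact (i.e., L_A(Q) = U_A(Q)) if and only if Q = V₁ or Q = V₂. -/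
/-- The complete bipartite graph `K_{m,n}` on `Fin m ⊕ Fin n`. -/
def Kmn (m n : ℕ) : SimpleGraph (Fin m ⊕ Fin n) :=
  completeBipartiteGraph (Fin m) (Fin n)

/-- The first part `V₁` of `K_{m,n}`. -/
def V1 (m n : ℕ) : Set (Fin m ⊕ Fin n) := Set.range Sum.inl

/-- The second part `V₂` of `K_{m,n}`. -/
def V2 (m n : ℕ) : Set (Fin m ⊕ Fin n) := Set.range Sum.inr

def permIsoL {m n : ℕ} (σ : Equiv.Perm (Fin m)) : Kmn m n ≃g Kmn m n :=
  ⟨Equiv.sumCongr σ (Equiv.refl _), by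
    intro a b; cases a <;> cases b <;> simp [Kmn]⟩

def permIsoR {m n : ℕ} (σ : Equiv.Perm (Fin n)) : Kmn m n ≃g Kmn m n :=
  ⟨Equiv.sumCongr (Equiv.refl _) σ, by
    intro a b; cases a <;> cases b <;> simp [Kmn]⟩

lemma nbhd_inl {m n : ℕ} (i : Fin m) :
    (Kmn m n).neighborSet (Sum.inl i) = V2 m n := by
  ext z; cases z <;> simp [Kmn, SimpleGraph.neighborSet, V2]

lemma nbhd_inr {m n : ℕ} (j : Fin n) :
    (Kmn m n).neighborSet (Sum.inr j) = V1 m n := by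
  ext z; cases z <;> simp [Kmn, SimpleGraph.neighborSet, V1]

lemma orb_inl {m n : ℕ} (hmn : m ≠ n) (i : Fin m) :
    orb (Kmn m n) (Sum.inl i) = V1 m n := by
  ext y
  constructor
  · rintro ⟨φ, rfl⟩
    rcases hy : φ (Sum.inl i) with j | j
    · exact ⟨j, rfl⟩
    · exfalso
      have e := (φ.mapNeighborSet (Sum.inl i)).symm
      rw [hy] at e
      have hcard := Nat.card_congr e
      rw [nbhd_inl, nbhd_inr] at hcard
      have h2 : Nat.card (V2 m n) = n := by
        rw [V2, Nat.card_range_of_injective Sum.inr_injective, Nat.card_eq_fintype_card,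
          Fintype.card_fin]
      have h1 : Nat.card (V1 m n) = m := by
        rw [V1, Nat.card_range_of_injective Sum.inl_injective, Nat.card_eq_fintype_card,
          Fintype.card_fin]
      rw [h1, h2] at hcard
      omega
  · rintro ⟨j, rfl⟩
    exact ⟨permIsoL (Equiv.swap i j), by simp [permIsoL]⟩

lemma orb_inr {m n : ℕ} (hmn : m ≠ n) (j : Fin n) :
    orb (Kmn m n) (Sum.inr j) = V2 m n := by
  ext y
  constructor
  · rintro ⟨φ, rfl⟩
    rcases hy : φ (Sum.inr j) with k | k
    · exfalso
      have e := (φ.mapNeighborSet (Sum.inr j)).symm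
      rw [hy] at e
      have hcard := Nat.card_congr e
      rw [nbhd_inl, nbhd_inr] at hcard
      have h2 : Nat.card (V2 m n) = n := by
        rw [V2, Nat.card_range_of_injective Sum.inr_injective, Nat.card_eq_fintype_card,
          Fintype.card_fin]
      have h1 : Nat.card (V1 m n) = m := by
        rw [V1, Nat.card_range_of_injective Sum.inl_injective, Nat.card_eq_fintype_card,
          Fintype.card_fin]
      rw [h1, h2] at hcard
      omega
    · exact ⟨k, rfl⟩
  · rintro ⟨k, rfl⟩
    exact ⟨permIsoR (Equiv.swap j k), by simp [permIsoR]⟩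

lemma V1V2_ne {m n : ℕ} {A : Set (Fin m ⊕ Fin n)} (hA : A.Nonempty) :
    V1 m n ∩ A ≠ V2 m n ∩ A := by
  intro h
  obtain ⟨a, ha⟩ := hA
  rcases a with i | j
  · have : Sum.inl i ∈ V2 m n ∩ A := h ▸ ⟨⟨i, rfl⟩, ha⟩
    obtain ⟨⟨k, hk⟩, -⟩ := this
    exact Sum.inl_ne_inr hk.symm
  · have : Sum.inr j ∈ V1 m n ∩ A := h.symm ▸ ⟨⟨j, rfl⟩, ha⟩
    obtain ⟨⟨k, hk⟩, -⟩ := this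
    exact Sum.inl_ne_inr hk

lemma eqCls_inl {m n : ℕ} (hmn : m ≠ n) {A : Set (Fin m ⊕ Fin n)} (hA : A.Nonempty)
    (i : Fin m) : eqCls (Kmn m n) A (Sum.inl i) = V1 m n := by
  ext y
  rcases y with j | j
  · simp only [eqCls, Indis, Set.mem_setOf_eq, orb_inl hmn]
    tauto
  · simp only [eqCls, Indis, Set.mem_setOf_eq, orb_inl hmn, orb_inr hmn]
    constructor
    · intro h; exact absurd h (V1V2_ne hA)
    · rintro ⟨k, hk⟩; exact absurd hk Sum.inl_ne_inr
  
lemma eqCls_inr {m n : ℕ} (hmn : m ≠ n) {A : Set (Fin m ⊕ Fin n)} (hA : A.Nonempty)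
    (j : Fin n) : eqCls (Kmn m n) A (Sum.inr j) = V2 m n := by
  ext y
  rcases y with k | k
  · simp only [eqCls, Indis, Set.mem_setOf_eq, orb_inl hmn, orb_inr hmn]
    constructor
    · intro h; exact absurd h.symm (V1V2_ne hA)
    · rintro ⟨l, hl⟩; exact absurd hl.symm Sum.inl_ne_inr
  · simp only [eqCls, Indis, Set.mem_setOf_eq, orb_inr hmn]
    tauto

/-- in `K_{m,n}` with `m ≠ n`, for nonempty `A` and nonempty `Q ≠ V`,
`Q` is `A`-exact (`L_A(Q) = U_A(Q)`) iff `Q = V₁` or `Q = V₂`. -/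
theorem stmt_13 (m n : ℕ) (hmn : m ≠ n) (A Q : Set (Fin m ⊕ Fin n))
    (hA : A.Nonempty) (hQ : Q.Nonempty) (hQV : Q ≠ Set.univ) :
    lowerApprox (Kmn m n) A Q = upperApprox (Kmn m n) A Q ↔
      (Q = V1 m n ∨ Q = V2 m n) := by
  have huniv : V1 m n ∪ V2 m n = Set.univ := by
    ext x; rcases x with i | j <;> simp [V1, V2]
  have hdisj : ∀ i : Fin m, (Sum.inl i : Fin m ⊕ Fin n) ∉ V2 m n := by
    rintro i ⟨k, hk⟩; exact Sum.inl_ne_inr hk.symm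
  have hdisj' : ∀ j : Fin n, (Sum.inr j : Fin m ⊕ Fin n) ∉ V1 m n := by
    rintro j ⟨k, hk⟩; exact Sum.inl_ne_inr hk
  constructor
  · intro hLU
    -- from membership in Q, deduce the whole part is in Q
    have key1 : ∀ i : Fin m, Sum.inl i ∈ Q → V1 m n ⊆ Q := by
      intro i hi
      have hU : Sum.inl i ∈ upperApprox (Kmn m n) A Q :=
        ⟨Sum.inl i, by rw [eqCls_inl hmn hA]; exact ⟨⟨i, rfl⟩, hi⟩⟩
      have hL : Sum.inl i ∈ lowerApprox (Kmn m n) A Q := hLU ▸ hU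
      rwa [lowerApprox, Set.mem_setOf_eq, eqCls_inl hmn hA] at hL
    have key2 : ∀ j : Fin n, Sum.inr j ∈ Q → V2 m n ⊆ Q := by
      intro j hj
      have hU : Sum.inr j ∈ upperApprox (Kmn m n) A Q :=
        ⟨Sum.inr j, by rw [eqCls_inr hmn hA]; exact ⟨⟨j, rfl⟩, hj⟩⟩
      have hL : Sum.inr j ∈ lowerApprox (Kmn m n) A Q := hLU ▸ hU
      rwa [lowerApprox, Set.mem_setOf_eq, eqCls_inr hmn hA] at hL
    obtain ⟨q, hq⟩ := hQ
    rcases q with i | j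
    · left
      apply Set.Subset.antisymm _ (key1 i hq)
      intro x hx
      rcases x with i' | j'
      · exact ⟨i', rfl⟩
      · exact absurd (Set.eq_univ_of_univ_subset (huniv ▸
              Set.union_subset (key1 i hq) (key2 j' hx))) hQV
    · right
      apply Set.Subset.antisymm _ (key2 j hq)
      intro x hx
      rcases x with i' | j'
      · exact absurd (Set.eq_univ_of_univ_subset (huniv ▸
              Set.union_subset (key1 i' hx) (key2 j hq))) hQV
      · exact ⟨j', rfl⟩
  · rintro (rfl | rfl)
    · ext x
      rcases x with i | j
      · constructor
        · intro _; exact ⟨Sum.inl i, by rw [eqCls_inl hmn hA]; exact ⟨⟨i, rfl⟩, ⟨i, rfl⟩⟩⟩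
        · intro _; rw [lowerApprox, Set.mem_setOf_eq, eqCls_inl hmn hA]
      · constructor
        · intro hL
          exfalso
          rw [lowerApprox, Set.mem_setOf_eq, eqCls_inr hmn hA] at hL
          exact hdisj' j (hL ⟨j, rfl⟩)
        · rintro ⟨z, hz⟩
          exfalso
          rw [eqCls_inr hmn hA] at hz
          rcases hz.1 with ⟨k, rfl⟩
          exact hdisj' k hz.2
    · ext x
      rcases x with i | j
      · constructor
        · intro hL
          exfalso
          rw [lowerApprox, Set.mem_setOf_eq, eqCls_inl hmn hA] at hL
          exact hdisj i (hL ⟨i, rfl⟩)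
        · rintro ⟨z, hz⟩
          exfalso
          rw [eqCls_inl hmn hA] at hz
          rcases hz.1 with ⟨k, rfl⟩
          exact hdisj k hz.2
      · constructor
        · intro _; exact ⟨Sum.inr j, by rw [eqCls_inr hmn hA]; exact ⟨⟨j, rfl⟩, ⟨j, rfl⟩⟩⟩
        · intro _; rw [lowerApprox, Set.mem_setOf_eq, eqCls_inr hmn hA]
end
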